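/- Consider the planar system ẋ = y^{2l−1} − x^{2k+1}, ẏ = −x + m·y^{2s+1} with positive integers l, k, s satisfying 2 ≤ l ≤ 2s and with s > kl. Then for every real number m the origin is an attractor. -/

import Mathlib

open Filter Topology Set

/-- A forward solution of the system ẋ = y^{2l-1} - x^{2k+1}, ẏ = -x + m·y^{2s+1},
defined (in the forward sense) on [0,∞). -/
def IsForwardSolution (l k s : ℕ) (m : ℝ) (x y : ℝ → ℝ) : Prop :=
  ∀ t : ℝ, 0 ≤ t →
    HasDerivWithinAt x (y t ^ (2 * l - 1) - x t ^ (2 * k + 1)) (Ici 0) t ∧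
    HasDerivWithinAt y (-x t + m * y t ^ (2 * s + 1)) (Ici 0) t

/-- The origin is an attractor: all forward solutions starting close enough to the
origin tend to the origin as t → +∞. -/
def OriginAttractor (l k s : ℕ) (m : ℝ) : Prop :=
  ∃ δ : ℝ, 0 < δ ∧ ∀ x y : ℝ → ℝ, IsForwardSolution l k s m x y →
    x 0 ^ 2 + y 0 ^ 2 < δ ^ 2 →
    Tendsto (fun t => (x t, y t)) atTop (𝓝 (0, 0))

/-!
Near the origin the system is a perturbation of `ẋ = y^{2l-1}, ẏ = -x`, which conserves
`l x² + y^{2l}`. Subtracting a small cross term `γ x y^{2kl+1}` gives a Lyapunov function `V` whose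
derivative along solutions is `-2l x^{2k+2} - γ y^{2kl+2l}` plus one term `γ (2kl+1) x² y^{2kl}` of
the same quasi-homogeneous weight (`x` of weight `l`, `y` of weight `1`), which Young's inequality
absorbs once `γ` is small, and three terms of strictly higher weight: this is where `k ≥ 1`,
`l ≤ 2s` and `s > kl` enter. On a small box, higher weight means small compared with
`x^{2k+2} + y^{2kl+2l}`, so `V̇ ≤ -(l x^{2k+2} + γ/2 y^{2kl+2l})` there. Then Lyapunov's argument
applies: a small sublevel set of `V` traps the solution, and inside it `V` decreases to `0`.
-/

lemma sub_le_mul_sub_of_hasDerivWithinAt_le {f f' : ℝ → ℝ} {a b c C : ℝ} (hca : c ≤ a)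
    (hab : a ≤ b) (hf : ∀ t ∈ Icc a b, HasDerivWithinAt f (f' t) (Ici c) t)
    (hf' : ∀ t ∈ Ico a b, f' t ≤ C) : f b - f a ≤ C * (b - a) := by
  have hline : ∀ t, HasDerivWithinAt (fun t => f a + C * (t - a)) C (Ici t) t := fun t => by
    simpa using ((hasDerivAt_id t).sub_const a).const_mul C |>.const_add (f a) |>.hasDerivWithinAt
  have := image_le_of_deriv_right_le_deriv_boundary (B := fun t => f a + C * (t - a))
    (fun t ht => (hf t ht).continuousWithinAt.mono fun u hu => hca.trans hu.1)
    (fun t ht => (hf t (Ico_subset_Icc_self ht)).mono (Ici_subset_Ici.2 (hca.trans ht.1)))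
    (by simp) (by fun_prop) (fun t _ => hline t) hf' (right_mem_Icc.2 hab)
  linarith

section Lyapunov

variable {E : Type*} [NormedAddCommGroup E]

/-- `W` is bounded below by a positive constant on every annulus `ε ≤ ‖q‖ ≤ r`; for continuous `W`
on a finite-dimensional space this is positive definiteness on the closed ball of radius `r`. -/
def IsPosDefOn (W : E → ℝ) (r : ℝ) : Prop :=
  ∀ ε > 0, ∃ η > 0, ∀ q, ε ≤ ‖q‖ → ‖q‖ ≤ r → η ≤ W q

lemma IsPosDefOn.mono {W W' : E → ℝ} {r : ℝ} (hW : IsPosDefOn W r)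
    (h : ∀ q, ‖q‖ ≤ r → W q ≤ W' q) : IsPosDefOn W' r := by
  intro ε hε
  obtain ⟨η, hη, hWη⟩ := hW ε hε
  exact ⟨η, hη, fun q h₁ h₂ => (hWη q h₁ h₂).trans (h q h₂)⟩

lemma IsPosDefOn.nonneg {W : E → ℝ} {r : ℝ} (hW : IsPosDefOn W r) (hW₀ : 0 ≤ W 0) {q : E}
    (hq : ‖q‖ ≤ r) : 0 ≤ W q := by
  rcases eq_or_ne q 0 with rfl | hq₀
  · exact hW₀
  · obtain ⟨η, hη, hWη⟩ := hW ‖q‖ (norm_pos_iff.2 hq₀)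
    exact hη.le.trans (hWη q le_rfl hq)

lemma forall_norm_lt_of_barrier {p : ℝ → E} {r : ℝ} (hp : ContinuousOn p (Ici 0))
    (h₀ : ‖p 0‖ < r) (hbarrier : ∀ T > 0, (∀ t ∈ Icc 0 T, ‖p t‖ ≤ r) → ‖p T‖ < r) :
    ∀ t, 0 ≤ t → ‖p t‖ < r := by
  by_contra! hexit
  set A := Ici 0 ∩ p ⁻¹' {q | r ≤ ‖q‖}
  have hA : IsClosed A :=
    hp.preimage_isClosed_of_isClosed isClosed_Ici (isClosed_le continuous_const continuous_norm)
  have hAbdd : BddBelow A := ⟨0, fun t ht => ht.1⟩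
  have hT : sInf A ∈ A := hA.csInf_mem (by obtain ⟨t, ht, h⟩ := hexit; exact ⟨t, ht, h⟩) hAbdd
  have hTpos : 0 < sInf A := hT.1.lt_of_ne fun h => (h ▸ hT.2 : r ≤ ‖p 0‖).not_gt h₀
  have hbefore : Ico 0 (sInf A) ⊆ Ici 0 ∩ p ⁻¹' Metric.closedBall 0 r := fun t ht =>
    ⟨ht.1, by
      simpa using le_of_not_ge fun h => (csInf_le hAbdd ⟨ht.1, h⟩).not_gt ht.2⟩
  have hclosed : IsClosed (Ici 0 ∩ p ⁻¹' Metric.closedBall 0 r) :=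
    hp.preimage_isClosed_of_isClosed isClosed_Ici Metric.isClosed_closedBall
  have hupto : ∀ t ∈ Icc 0 (sInf A), ‖p t‖ ≤ r := fun t ht => by
    rw [← closure_Ico hTpos.ne] at ht
    simpa using (closure_minimal hbefore hclosed ht).2
  exact (hbarrier _ hTpos hupto).not_ge hT.2

variable {V V' : E → ℝ} {r : ℝ} {p : ℝ → E}

lemma lyapunov_along_le (hV'₀ : V' 0 ≤ 0) (hV' : IsPosDefOn (fun q => -V' q) r)
    (hVp : ∀ t, 0 ≤ t → HasDerivWithinAt (fun t => V (p t)) (V' (p t)) (Ici 0) t)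
    {a b : ℝ} (ha : 0 ≤ a) (hab : a ≤ b) (hball : ∀ t ∈ Icc a b, ‖p t‖ ≤ r) :
    V (p b) ≤ V (p a) := by
  have := sub_le_mul_sub_of_hasDerivWithinAt_le ha hab (fun t ht => hVp t (ha.trans ht.1))
    (C := 0) fun t ht => by
      simpa using hV'.nonneg (by simpa using hV'₀) (hball t (Ico_subset_Icc_self ht))
  linarith

lemma exists_lyapunov_along_lt (hV₀ : Tendsto V (𝓝 0) (𝓝 0)) (hV' : IsPosDefOn (fun q => -V' q) r)
    (hVp : ∀ t, 0 ≤ t → HasDerivWithinAt (fun t => V (p t)) (V' (p t)) (Ici 0) t)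
    (htrap : ∀ t, 0 ≤ t → ‖p t‖ ≤ r) {β : ℝ} (hβ : 0 < β) : ∃ t, 0 ≤ t ∧ V (p t) < β := by
  by_contra! hlarge
  obtain ⟨ε, hε, hεV⟩ := Metric.eventually_nhds_iff.1 (hV₀.eventually (gt_mem_nhds hβ))
  have haway : ∀ t, 0 ≤ t → ε ≤ ‖p t‖ := fun t ht =>
    le_of_not_gt fun h => (hlarge t ht).not_gt (hεV (by simpa using h))
  obtain ⟨η, hη, hηV'⟩ := hV' ε hε
  -- along the whole trajectory `V` decreases at rate at least `η` but stays above `β`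
  set T := V (p 0) / η
  have hT : 0 ≤ T := div_nonneg ((hβ.le.trans (hlarge 0 le_rfl))) hη.le
  have hdecay := sub_le_mul_sub_of_hasDerivWithinAt_le le_rfl hT
    (fun t ht => hVp t ht.1) (C := -η) fun t ht => by
      linarith [hηV' _ (haway t ht.1) (htrap t ht.1)]
  have : η * T = V (p 0) := mul_div_cancel₀ _ hη.ne'
  linarith [hlarge T hT]

lemma tendsto_zero_of_lyapunov_of_forall_norm_le (hV₀ : Tendsto V (𝓝 0) (𝓝 0))
    (hV : IsPosDefOn V r) (hV'₀ : V' 0 ≤ 0) (hV' : IsPosDefOn (fun q => -V' q) r)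
    (hVp : ∀ t, 0 ≤ t → HasDerivWithinAt (fun t => V (p t)) (V' (p t)) (Ici 0) t)
    (htrap : ∀ t, 0 ≤ t → ‖p t‖ ≤ r) : Tendsto p atTop (𝓝 0) := by
  rw [Metric.tendsto_atTop]
  intro ε hε
  obtain ⟨η, hη, hηV⟩ := hV ε hε
  obtain ⟨t₀, ht₀, hVt₀⟩ := exists_lyapunov_along_lt hV₀ hV' hVp htrap hη
  refine ⟨t₀, fun t ht => ?_⟩
  rw [dist_zero_right]
  by_contra! hfar
  have := lyapunov_along_le hV'₀ hV' hVp ht₀ ht fun u hu => htrap u (ht₀.trans hu.1)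
  linarith [hηV _ hfar (htrap t (ht₀.trans ht))]

theorem exists_forall_tendsto_zero_of_lyapunov (hr : 0 < r) (hV₀ : Tendsto V (𝓝 0) (𝓝 0))
    (hV : IsPosDefOn V r) (hV'₀ : V' 0 ≤ 0) (hV' : IsPosDefOn (fun q => -V' q) r) :
    ∃ δ > 0, ∀ p : ℝ → E, ContinuousOn p (Ici 0) →
      (∀ t, 0 ≤ t → HasDerivWithinAt (fun t => V (p t)) (V' (p t)) (Ici 0) t) →
      ‖p 0‖ < δ → Tendsto p atTop (𝓝 0) := by
  obtain ⟨ρ, hρ, hρV⟩ := hV r hr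
  obtain ⟨δ, hδ, hδV⟩ := Metric.eventually_nhds_iff.1 (hV₀.eventually (gt_mem_nhds hρ))
  refine ⟨min δ r, lt_min hδ hr, fun p hp hVp hp₀ => ?_⟩
  have hVp₀ : V (p 0) < ρ := hδV (by simpa using hp₀.trans_le (min_le_left _ _))
  -- a trajectory can only leave the ball through the sphere, where `V ≥ ρ > V (p 0)`
  have htrap := forall_norm_lt_of_barrier hp (hp₀.trans_le (min_le_right _ _)) fun T hT hball =>
    lt_of_le_of_ne (hball T (right_mem_Icc.2 hT.le)) fun hsphere =>
      (lyapunov_along_le hV'₀ hV' hVp le_rfl hT.le hball).not_gt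
        (hVp₀.trans_le (hρV _ hsphere.ge hsphere.le))
  exact tendsto_zero_of_lyapunov_of_forall_norm_le hV₀ hV hV'₀ hV' hVp fun t ht => (htrap t ht).le

end Lyapunov

lemma pow_mul_pow_le_of_weight_lt {a b δ : ℝ} {l i j n : ℕ} (ha : 0 ≤ a) (hb : 0 ≤ b)
    (haδ : a ≤ δ) (hbδ : b ≤ δ) (hδ : δ ≤ 1) (hl : 0 < l) (hw : l * n < l * i + j) :
    a ^ i * b ^ j ≤ δ * (a ^ n + b ^ (l * n)) := by
  set u := max a (b ^ l)
  have hbl : b ^ l ≤ δ := (pow_le_of_le_one hb (hbδ.trans hδ) hl.ne').trans hbδ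
  have hu : 0 ≤ u := ha.trans (le_max_left _ _)
  have hun : u ^ n ≤ a ^ n + b ^ (l * n) := by
    rcases max_cases a (b ^ l) with ⟨h, -⟩ | ⟨h, -⟩ <;> simp only [u, h]
    · linarith [pow_nonneg hb (l * n)]
    · rw [← pow_mul]; linarith [pow_nonneg ha n]
  obtain ⟨q, r, hr, rfl⟩ : ∃ q r, r < l ∧ j = l * q + r :=
    ⟨j / l, j % l, Nat.mod_lt j hl, (Nat.div_add_mod j l).symm⟩
  have hn : n ≤ i + q := by
    by_contra! h
    have : l * (i + q + 1) ≤ l * n := Nat.mul_le_mul_left l h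
    nlinarith
  have hextra : 0 < i + q - n + r := by
    by_contra! h
    have : l * (i + q) ≤ l * n := Nat.mul_le_mul_left l (by omega)
    nlinarith
  -- `a ≤ u` and `b ^ l ≤ u`, so the monomial is at most `u ^ n` times a factor of positive degree
  calc a ^ i * b ^ (l * q + r) ≤ u ^ i * (u ^ q * b ^ r) := by
        rw [pow_add, pow_mul]
        gcongr
        exacts [le_max_left _ _, le_max_right _ _]
    _ = u ^ n * (u ^ (i + q - n) * b ^ r) := by
        rw [← mul_assoc, ← pow_add, ← mul_assoc, ← pow_add, Nat.add_sub_cancel' hn]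
    _ ≤ (a ^ n + b ^ (l * n)) * (δ ^ (i + q - n) * δ ^ r) := by
        have hδ₀ : 0 ≤ δ := ha.trans haδ
        exact mul_le_mul hun (mul_le_mul (pow_le_pow_left₀ hu (max_le haδ hbl) _)
          (pow_le_pow_left₀ hb hbδ _) (by positivity) (by positivity)) (by positivity)
          (by positivity)
    _ ≤ (a ^ n + b ^ (l * n)) * δ := by
        rw [← pow_add]
        gcongr
        exact pow_le_of_le_one (ha.trans haδ) hδ hextra.ne'
    _ = δ * (a ^ n + b ^ (l * n)) := mul_comm _ _

lemma abs_pow_mul_pow_le_of_weight_lt {x y δ : ℝ} {l i j n : ℕ} (hx : |x| ≤ δ) (hy : |y| ≤ δ)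
    (hδ : δ ≤ 1) (hl : 0 < l) (hn : Even n) (hw : l * n < l * i + j) :
    |x ^ i * y ^ j| ≤ δ * (x ^ n + y ^ (l * n)) := by
  rw [abs_mul, abs_pow, abs_pow, ← hn.pow_abs x, ← (hn.mul_left l).pow_abs y]
  exact pow_mul_pow_le_of_weight_lt (abs_nonneg x) (abs_nonneg y) hx hy hδ hl hw

lemma mul_pow_le_pow_succ_add_pow_succ_div {u v Λ : ℝ} (hu : 0 ≤ u) (hv : 0 ≤ v) (hΛ : 0 < Λ)
    (k : ℕ) : u * v ^ k ≤ Λ ^ k * u ^ (k + 1) + v ^ (k + 1) / Λ := by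
  rcases le_total v (Λ * u) with h | h
  · calc u * v ^ k ≤ u * (Λ * u) ^ k := by gcongr
      _ = Λ ^ k * u ^ (k + 1) := by ring
      _ ≤ _ := le_add_of_nonneg_right (by positivity)
  · calc u * v ^ k ≤ v / Λ * v ^ k := by gcongr; rwa [le_div_iff₀ hΛ, mul_comm]
      _ = v ^ (k + 1) / Λ := by ring
      _ ≤ _ := le_add_of_nonneg_left (by positivity)

lemma isPosDefOn_mul_pow_add_mul_pow {a b : ℝ} {i j : ℕ} (ha : 0 < a) (hb : 0 < b)
    (hi : Even i) (hj : Even j) (r : ℝ) :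
    IsPosDefOn (fun q : ℝ × ℝ => a * q.1 ^ i + b * q.2 ^ j) r := by
  intro ε hε
  refine ⟨min (a * ε ^ i) (b * ε ^ j), by positivity, fun q hq _ => ?_⟩
  have hi' : 0 ≤ a * q.1 ^ i := mul_nonneg ha.le (hi.pow_nonneg _)
  have hj' : 0 ≤ b * q.2 ^ j := mul_nonneg hb.le (hj.pow_nonneg _)
  rcases le_max_iff.1 (hq.trans_eq (Prod.norm_def q)) with h | h
  · have : a * ε ^ i ≤ a * q.1 ^ i := by
      rw [← hi.pow_abs q.1]; gcongr; exact h
    linarith [min_le_left (a * ε ^ i) (b * ε ^ j)]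
  · have : b * ε ^ j ≤ b * q.2 ^ j := by
      rw [← hj.pow_abs q.2]; gcongr; exact h
    linarith [min_le_right (a * ε ^ i) (b * ε ^ j)]

lemma Prod.norm_lt_of_sq_add_sq_lt {a b d : ℝ} (h : a ^ 2 + b ^ 2 < d ^ 2) (hd : 0 ≤ d) :
    ‖(a, b)‖ < d := by
  rw [Prod.norm_def, max_lt_iff, Real.norm_eq_abs, Real.norm_eq_abs]
  exact ⟨abs_lt_of_sq_lt_sq (by nlinarith [sq_nonneg b]) hd,
    abs_lt_of_sq_lt_sq (by nlinarith [sq_nonneg a]) hd⟩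

lemma IsForwardSolution.continuousOn {l k s : ℕ} {m : ℝ} {x y : ℝ → ℝ}
    (h : IsForwardSolution l k s m x y) : ContinuousOn (fun t => (x t, y t)) (Ici 0) :=
  fun t ht => (h t ht).1.continuousWithinAt.prodMk (h t ht).2.continuousWithinAt

section System

variable (l k s : ℕ) (m γ : ℝ)

def lyapunov (q : ℝ × ℝ) : ℝ :=
  l * q.1 ^ 2 + q.2 ^ (2 * l) - γ * (q.1 * q.2 ^ (2 * k * l + 1))

def lyapunovDeriv (q : ℝ × ℝ) : ℝ :=
  -2 * l * q.1 ^ (2 * k + 2) + 2 * l * m * q.2 ^ (2 * l + 2 * s) - γ * q.2 ^ (2 * k * l + 2 * l)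
    + γ * q.1 ^ (2 * k + 1) * q.2 ^ (2 * k * l + 1)
    + γ * (2 * k * l + 1) * q.1 ^ 2 * q.2 ^ (2 * k * l)
    - γ * (2 * k * l + 1) * m * q.1 * q.2 ^ (2 * k * l + 2 * s + 1)

/- `γ = dampingCoeff` lets Young's inequality split `γ (2kl+1) x² y^{2kl}` into
`x^{2k+2} / 4 + γ/8 y^{2kl+2l}`; `δ = trapRadius` then bounds the higher-weight terms of
`lyapunovDeriv` by `γ/8 (x^{2k+2} + y^{2kl+2l})` on the box `|x|, |y| ≤ δ`. -/
noncomputable def dampingCoeff : ℝ := 1 / (4 * (2 * k * l + 1) * (8 * (2 * k * l + 1)) ^ k)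

noncomputable def trapRadius : ℝ := dampingCoeff l k / (8 * ((2 * l + 2 * k * l + 2) * (|m| + 1)))

variable {l k s m γ}

lemma hasDerivWithinAt_lyapunov (hl : 1 ≤ l) {x y : ℝ → ℝ} (h : IsForwardSolution l k s m x y)
    {t : ℝ} (ht : 0 ≤ t) :
    HasDerivWithinAt (fun t => lyapunov l k γ (x t, y t)) (lyapunovDeriv l k s m γ (x t, y t))
      (Ici 0) t := by
  obtain ⟨hx, hy⟩ := h t ht
  refine (((hx.pow 2).const_mul (l : ℝ)).add (hy.pow (2 * l)) |>.sub
    ((hx.mul (hy.pow (2 * k * l + 1))).const_mul γ)).congr_deriv ?_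
  obtain ⟨l, rfl⟩ : ∃ l', l = l' + 1 := ⟨l - 1, by omega⟩
  simp only [lyapunovDeriv, show 2 * (l + 1) - 1 = 2 * l + 1 by omega, Nat.add_sub_cancel,
    Pi.pow_apply]
  push_cast
  ring

lemma continuous_lyapunov : Continuous (lyapunov l k γ) := by
  unfold lyapunov; fun_prop

lemma isPosDefOn_lyapunov (hl : 1 ≤ l) (hk : 1 ≤ k) (hγ : |γ| ≤ 1) {r : ℝ} (hr : r ≤ 1) :
    IsPosDefOn (lyapunov l k γ) r := by
  refine (isPosDefOn_mul_pow_add_mul_pow one_half_pos one_half_pos even_two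
    (even_two_mul l) r).mono fun q hq => ?_
  obtain ⟨-, hy⟩ := norm_prod_le_iff.1 (hq.trans hr)
  rw [Real.norm_eq_abs] at hy
  have hcross : γ * (q.1 * q.2 ^ (2 * k * l + 1)) ≤ (q.1 ^ 2 + q.2 ^ (2 * l)) / 2 :=
    calc γ * (q.1 * q.2 ^ (2 * k * l + 1))
        ≤ |γ| * (|q.1| * |q.2| ^ (2 * k * l + 1)) := by
          rw [← abs_pow, ← abs_mul, ← abs_mul]; exact le_abs_self _
      _ ≤ 1 * (|q.1| * |q.2| ^ (2 * k * l + 1)) := by gcongr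
      _ ≤ (|q.1| ^ 2 + |q.2| ^ ((2 * k * l + 1) * 2)) / 2 := by
          rw [pow_mul]; nlinarith [sq_nonneg (|q.1| - |q.2| ^ (2 * k * l + 1))]
      _ ≤ (q.1 ^ 2 + q.2 ^ (2 * l)) / 2 := by
          have : |q.2| ^ ((2 * k * l + 1) * 2) ≤ |q.2| ^ (2 * l) :=
            pow_le_pow_of_le_one (abs_nonneg _) hy (by nlinarith)
          rw [sq_abs, ← (even_two_mul l).pow_abs]
          linarith
  have hl' : q.1 ^ 2 ≤ l * q.1 ^ 2 :=
    le_mul_of_one_le_left (sq_nonneg _) (by exact_mod_cast hl)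
  simp only [lyapunov]
  linarith

lemma dampingCoeff_pos : 0 < dampingCoeff l k := by
  unfold dampingCoeff; positivity

lemma dampingCoeff_mul_young :
    dampingCoeff l k * (2 * k * l + 1) * (8 * (2 * k * l + 1)) ^ k = 1 / 4 := by
  unfold dampingCoeff
  field_simp

lemma dampingCoeff_le_one : dampingCoeff l k ≤ 1 := by
  have hJ : (1 : ℝ) ≤ 2 * k * l + 1 := by linarith [show (0 : ℝ) ≤ 2 * k * l by positivity]
  have hP : (1 : ℝ) ≤ (8 * (2 * k * l + 1)) ^ k := one_le_pow₀ (by linarith)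
  nlinarith [dampingCoeff_mul_young (l := l) (k := k), dampingCoeff_pos (l := l) (k := k),
    one_le_mul_of_one_le_of_one_le hJ hP]

lemma trapRadius_pos : 0 < trapRadius l k m := by
  have := dampingCoeff_pos (l := l) (k := k)
  unfold trapRadius; positivity

lemma trapRadius_le_one : trapRadius l k m ≤ 1 := by
  have hK : (1 : ℝ) ≤ 8 * ((2 * l + 2 * k * l + 2) * (|m| + 1)) := by
    nlinarith [show (0 : ℝ) ≤ 2 * l + 2 * k * l by positivity, abs_nonneg m]
  unfold trapRadius
  rw [div_le_one (by linarith)]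
  linarith [dampingCoeff_le_one (l := l) (k := k)]

lemma trapRadius_mul_le :
    trapRadius l k m * (2 * l * |m| + dampingCoeff l k + dampingCoeff l k * (2 * k * l + 1) * |m|)
      ≤ dampingCoeff l k / 8 := by
  have hγ := dampingCoeff_le_one (l := l) (k := k)
  have hc : 2 * l * |m| + dampingCoeff l k + dampingCoeff l k * (2 * k * l + 1) * |m|
      ≤ (2 * l + 2 * k * l + 2) * (|m| + 1) := by
    nlinarith [show (0 : ℝ) ≤ 2 * l + 2 * k * l by positivity, abs_nonneg m,
      mul_le_mul_of_nonneg_right hγ (show (0 : ℝ) ≤ (2 * k * l + 1) * |m| by positivity)]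
  calc _ ≤ trapRadius l k m * ((2 * l + 2 * k * l + 2) * (|m| + 1)) :=
        mul_le_mul_of_nonneg_left hc trapRadius_pos.le
    _ = dampingCoeff l k / 8 := by unfold trapRadius; field_simp

lemma dampingCoeff_young (x y : ℝ) :
    dampingCoeff l k * (2 * k * l + 1) * (x ^ 2 * y ^ (2 * k * l))
      ≤ x ^ (2 * k + 2) / 4 + dampingCoeff l k / 8 * y ^ (2 * k * l + 2 * l) := by
  have hJ : (0 : ℝ) < 8 * (2 * k * l + 1) := by positivity
  have hyoung : x ^ 2 * y ^ (2 * k * l) ≤ (8 * (2 * k * l + 1)) ^ k * x ^ (2 * k + 2)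
      + y ^ (2 * k * l + 2 * l) / (8 * (2 * k * l + 1)) :=
    calc x ^ 2 * y ^ (2 * k * l) = x ^ 2 * (y ^ (2 * l)) ^ k := by ring
      _ ≤ (8 * (2 * k * l + 1)) ^ k * (x ^ 2) ^ (k + 1)
          + (y ^ (2 * l)) ^ (k + 1) / (8 * (2 * k * l + 1)) :=
        mul_pow_le_pow_succ_add_pow_succ_div (sq_nonneg x) ((even_two_mul l).pow_nonneg y) hJ k
      _ = _ := by ring
  calc _ ≤ dampingCoeff l k * (2 * k * l + 1) * ((8 * (2 * k * l + 1)) ^ k * x ^ (2 * k + 2)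
        + y ^ (2 * k * l + 2 * l) / (8 * (2 * k * l + 1))) := by
        have := dampingCoeff_pos (l := l) (k := k)
        gcongr
    _ = dampingCoeff l k * (2 * k * l + 1) * (8 * (2 * k * l + 1)) ^ k * x ^ (2 * k + 2)
        + dampingCoeff l k / 8 * y ^ (2 * k * l + 2 * l) := by field_simp
    _ = _ := by rw [dampingCoeff_mul_young]; ring

lemma lyapunovDeriv_le (hl : 1 ≤ l) (hk : 1 ≤ k) (hls : l ≤ 2 * s) (hskl : k * l < s)
    {q : ℝ × ℝ} (hq : ‖q‖ ≤ trapRadius l k m) :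
    lyapunovDeriv l k s m (dampingCoeff l k) q
      ≤ -(l * q.1 ^ (2 * k + 2) + dampingCoeff l k / 2 * q.2 ^ (2 * k * l + 2 * l)) := by
  obtain ⟨x, y⟩ := q
  obtain ⟨hx, hy⟩ := norm_prod_le_iff.1 hq
  rw [Real.norm_eq_abs] at hx hy
  have hX : 0 ≤ x ^ (2 * k + 2) := Even.pow_nonneg ⟨k + 1, by ring⟩ x
  have hY : 0 ≤ y ^ (2 * k * l + 2 * l) := Even.pow_nonneg ⟨k * l + l, by ring⟩ y
  have hweight : ∀ i j, l * (2 * k + 2) < l * i + j →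
      |x ^ i * y ^ j| ≤ trapRadius l k m * (x ^ (2 * k + 2) + y ^ (2 * k * l + 2 * l)) :=
    fun i j hw => show 2 * k * l + 2 * l = l * (2 * k + 2) by ring ▸
      abs_pow_mul_pow_le_of_weight_lt hx hy trapRadius_le_one hl ⟨k + 1, by ring⟩ hw
  have h₁ := hweight 0 (2 * l + 2 * s) (by nlinarith)
  have h₂ := hweight (2 * k + 1) (2 * k * l + 1) (by nlinarith)
  have h₃ := hweight 1 (2 * k * l + 2 * s + 1) (by nlinarith)
  rw [pow_zero, one_mul] at h₁
  rw [pow_one] at h₃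
  simp only [lyapunovDeriv]
  set γ := dampingCoeff l k
  set δ := trapRadius l k m
  have hγ : 0 < γ := dampingCoeff_pos
  have hγ₁ : γ ≤ 1 := dampingCoeff_le_one
  have hδ : δ * (2 * l * |m| + γ + γ * (2 * k * l + 1) * |m|) ≤ γ / 8 := trapRadius_mul_le
  have f₁ : m * y ^ (2 * l + 2 * s) ≤ |m| * |y ^ (2 * l + 2 * s)| :=
    (le_abs_self _).trans_eq (abs_mul _ _)
  have f₂ := le_abs_self (x ^ (2 * k + 1) * y ^ (2 * k * l + 1))
  have f₃ : -(m * (x * y ^ (2 * k * l + 2 * s + 1))) ≤ |m| * |x * y ^ (2 * k * l + 2 * s + 1)| :=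
    (neg_le_abs _).trans_eq (abs_mul _ _)
  linarith [mul_le_mul_of_nonneg_left (f₁.trans (mul_le_mul_of_nonneg_left h₁ (abs_nonneg m)))
      (show (0 : ℝ) ≤ 2 * l by positivity),
    mul_le_mul_of_nonneg_left (f₂.trans h₂) hγ.le,
    mul_le_mul_of_nonneg_left (f₃.trans (mul_le_mul_of_nonneg_left h₃ (abs_nonneg m)))
      (show (0 : ℝ) ≤ γ * (2 * k * l + 1) by positivity),
    dampingCoeff_young (l := l) (k := k) x y,
    mul_le_mul_of_nonneg_right hδ (add_nonneg hX hY),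
    mul_le_mul_of_nonneg_right hγ₁ hX, mul_nonneg hγ.le hY,
    mul_le_mul_of_nonneg_right (show (1 : ℝ) ≤ l by exact_mod_cast hl) hX]

end System

theorem origin_attractor_s_gt_kl (l k s : ℕ) (hl : 2 ≤ l) (hk : 1 ≤ k)
    (hls : l ≤ 2 * s) (hskl : k * l < s) (m : ℝ) :
    OriginAttractor l k s m := by
  have hl₁ : 1 ≤ l := by omega
  have hV₀ : Tendsto (lyapunov l k (dampingCoeff l k)) (𝓝 0) (𝓝 0) := by
    convert continuous_lyapunov.tendsto 0
    simp [lyapunov, show 2 * l ≠ 0 by omega]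
  have hV : IsPosDefOn (lyapunov l k (dampingCoeff l k)) (trapRadius l k m) :=
    isPosDefOn_lyapunov hl₁ hk (by rw [abs_of_pos dampingCoeff_pos]; exact dampingCoeff_le_one)
      trapRadius_le_one
  have hV' : IsPosDefOn (fun q => -lyapunovDeriv l k s m (dampingCoeff l k) q) (trapRadius l k m) :=
    (isPosDefOn_mul_pow_add_mul_pow (by positivity) (half_pos dampingCoeff_pos)
      ⟨k + 1, by ring⟩ ⟨k * l + l, by ring⟩ _).mono
      fun q hq => le_neg.1 (lyapunovDeriv_le hl₁ hk hls hskl hq)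
  obtain ⟨δ, hδ, hattract⟩ :=
    exists_forall_tendsto_zero_of_lyapunov trapRadius_pos hV₀ hV
      (by simp [lyapunovDeriv, show 2 * l ≠ 0 by omega]) hV'
  exact ⟨δ, hδ, fun x y hsol h₀ => hattract _ hsol.continuousOn
    (fun t ht => hasDerivWithinAt_lyapunov hl₁ hsol ht) (Prod.norm_lt_of_sq_add_sq_lt h₀ hδ.le)⟩
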